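/- Fix an integer n ≥ 2 and let r₁ and r₂ be the first two rows of a Haar-random n×n orthogonal matrix. Then for every n×n real matrix A, E[(r₁ᵀ A r₁)²] ≥ E[(r₁ᵀ A r₁)(r₂ᵀ A r₂)], where the expectation is over the Haar measure. -/
import Mathlib

open MeasureTheory Matrix

noncomputable instance matrixMeasurableSpace (n : ℕ) :
    MeasurableSpace (Matrix (Fin n) (Fin n) ℝ) :=
  inferInstanceAs (MeasurableSpace (Fin n → Fin n → ℝ))

/-- `μ` is the Haar probability measure on the orthogonal group `O(n)`: a
left-translation-invariant Borel probability measure (this characterizes the Haar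
probability measure on the compact group `O(n)`). -/
def IsHaarProb (n : ℕ) (μ : Measure (Matrix.orthogonalGroup (Fin n) ℝ)) : Prop :=
  IsProbabilityMeasure μ ∧
    ∀ g : Matrix.orthogonalGroup (Fin n) ℝ, μ.map (fun x => g * x) = μ

namespace Stmt3Aux

variable {n : ℕ}

lemma entry_meas (i j : Fin n) :
    Measurable fun U : Matrix.orthogonalGroup (Fin n) ℝ => (U : Matrix (Fin n) (Fin n) ℝ) i j :=
  (measurable_pi_apply j).comp ((measurable_pi_apply i).comp measurable_subtype_coe)

lemma q_meas (A : Matrix (Fin n) (Fin n) ℝ) (i : Fin n) :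
    Measurable fun U : Matrix.orthogonalGroup (Fin n) ℝ =>
      ((U : Matrix (Fin n) (Fin n) ℝ) i) ⬝ᵥ A.mulVec ((U : Matrix (Fin n) (Fin n) ℝ) i) := by
  simp only [dotProduct, mulVec]
  exact Finset.measurable_sum _ fun k _ =>
    (entry_meas i k).mul (Finset.measurable_sum _ fun l _ =>
      measurable_const.mul (entry_meas i l))

lemma entry_abs_le (U : Matrix.orthogonalGroup (Fin n) ℝ) (i j : Fin n) :
    |(U : Matrix (Fin n) (Fin n) ℝ) i j| ≤ 1 := by
  have h : (U : Matrix (Fin n) (Fin n) ℝ) * star (U : Matrix (Fin n) (Fin n) ℝ) = 1 :=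
    (Matrix.mem_unitaryGroup_iff).mp U.2
  have hdiag : ∑ k, (U : Matrix (Fin n) (Fin n) ℝ) i k * (U : Matrix (Fin n) (Fin n) ℝ) i k
      = 1 := by
    have := congrFun (congrFun h i) i
    simpa [Matrix.mul_apply, Matrix.star_eq_conjTranspose, Matrix.conjTranspose_apply] using this
  have hle : (U : Matrix (Fin n) (Fin n) ℝ) i j * (U : Matrix (Fin n) (Fin n) ℝ) i j ≤ 1 := by
    rw [← hdiag]
    exact Finset.single_le_sum
      (f := fun k => (U : Matrix (Fin n) (Fin n) ℝ) i k * (U : Matrix (Fin n) (Fin n) ℝ) i k)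
      (fun k _ => mul_self_nonneg _) (Finset.mem_univ j)
  nlinarith [abs_nonneg ((U : Matrix (Fin n) (Fin n) ℝ) i j), sq_abs ((U : Matrix (Fin n) (Fin n) ℝ) i j)]

lemma q_bound (A : Matrix (Fin n) (Fin n) ℝ) (U : Matrix.orthogonalGroup (Fin n) ℝ) (i : Fin n) :
    |((U : Matrix (Fin n) (Fin n) ℝ) i) ⬝ᵥ A.mulVec ((U : Matrix (Fin n) (Fin n) ℝ) i)|
      ≤ ∑ k, ∑ l, |A k l| := by
  set r := (U : Matrix (Fin n) (Fin n) ℝ) i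
  have hr : ∀ k, |r k| ≤ 1 := fun k => entry_abs_le U i k
  calc |r ⬝ᵥ A.mulVec r| = |∑ k, r k * ∑ l, A k l * r l| := by simp [dotProduct, mulVec]
    _ ≤ ∑ k, |r k * ∑ l, A k l * r l| := Finset.abs_sum_le_sum_abs _ _
    _ ≤ ∑ k, ∑ l, |A k l| := by
        refine Finset.sum_le_sum fun k _ => ?_
        rw [abs_mul]
        calc |r k| * |∑ l, A k l * r l| ≤ 1 * ∑ l, |A k l * r l| := by
              exact mul_le_mul (hr k) (Finset.abs_sum_le_sum_abs _ _) (abs_nonneg _)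
                zero_le_one
          _ = ∑ l, |A k l| * |r l| := by simp [abs_mul]
          _ ≤ ∑ l, |A k l| * 1 := Finset.sum_le_sum fun l _ =>
              mul_le_mul_of_nonneg_left (hr l) (abs_nonneg _)
          _ = ∑ l, |A k l| := by simp

end Stmt3Aux

open Stmt3Aux in
/-- For `n ≥ 2`, `r₁, r₂` the first two rows of a Haar-random `n×n` orthogonal matrix and
any `n×n` real matrix `A`, `E[(r₁ᵀAr₁)²] ≥ E[(r₁ᵀAr₁)(r₂ᵀAr₂)]`. -/
theorem stmt3 (n : ℕ) (hn : 2 ≤ n)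
    (μ : Measure (Matrix.orthogonalGroup (Fin n) ℝ)) (hμ : IsHaarProb n μ)
    (A : Matrix (Fin n) (Fin n) ℝ) :
    ∫ U : Matrix.orthogonalGroup (Fin n) ℝ,
        (fun r₁ : Fin n → ℝ => (r₁ ⬝ᵥ A.mulVec r₁) ^ 2)
          ((U : Matrix (Fin n) (Fin n) ℝ) ⟨0, by omega⟩) ∂μ ≥
      ∫ U : Matrix.orthogonalGroup (Fin n) ℝ,
        (fun r₁ r₂ : Fin n → ℝ => (r₁ ⬝ᵥ A.mulVec r₁) * (r₂ ⬝ᵥ A.mulVec r₂))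
          ((U : Matrix (Fin n) (Fin n) ℝ) ⟨0, by omega⟩)
          ((U : Matrix (Fin n) (Fin n) ℝ) ⟨1, by omega⟩) ∂μ := by
  obtain ⟨hprob, hinv⟩ := hμ
  set i0 : Fin n := ⟨0, by omega⟩
  set i1 : Fin n := ⟨1, by omega⟩
  set F : Matrix.orthogonalGroup (Fin n) ℝ → ℝ := fun U =>
    ((U : Matrix (Fin n) (Fin n) ℝ) i0) ⬝ᵥ A.mulVec ((U : Matrix (Fin n) (Fin n) ℝ) i0) with hF
  set G : Matrix.orthogonalGroup (Fin n) ℝ → ℝ := fun U =>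
    ((U : Matrix (Fin n) (Fin n) ℝ) i1) ⬝ᵥ A.mulVec ((U : Matrix (Fin n) (Fin n) ℝ) i1) with hG
  set C : ℝ := ∑ k, ∑ l, |A k l| with hC
  have hFm : Measurable F := q_meas A i0
  have hGm : Measurable G := q_meas A i1
  have hFb : ∀ U, |F U| ≤ C := fun U => q_bound A U i0
  have hGb : ∀ U, |G U| ≤ C := fun U => q_bound A U i1
  -- integrability
  have hint : ∀ (f : Matrix.orthogonalGroup (Fin n) ℝ → ℝ), Measurable f →
      (∀ U, |f U| ≤ C ^ 2) → Integrable f μ := fun f hm hb =>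
    (integrable_const (C ^ 2)).mono' hm.aestronglyMeasurable
      (Filter.Eventually.of_forall fun U => by simpa using hb U)
  have habs : ∀ U, |F U| * |G U| ≤ C ^ 2 := fun U => by
    have h0 : (0:ℝ) ≤ |F U| := abs_nonneg _
    nlinarith [hFb U, hGb U, abs_nonneg (G U)]
  have hintFG : Integrable (fun U => F U * G U) μ :=
    hint _ (hFm.mul hGm) fun U => by rw [abs_mul]; exact habs U
  have hintF2 : Integrable (fun U => F U ^ 2) μ :=
    hint _ (hFm.pow_const 2) fun U => by
      rw [abs_pow]
      exact pow_le_pow_left₀ (abs_nonneg _) (hFb U) 2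
  have hintG2 : Integrable (fun U => G U ^ 2) μ :=
    hint _ (hGm.pow_const 2) fun U => by
      rw [abs_pow]
      exact pow_le_pow_left₀ (abs_nonneg _) (hGb U) 2
  -- the swap
  set σ : Equiv.Perm (Fin n) := Equiv.swap i0 i1 with hσ
  have hPmem : σ.permMatrix ℝ ∈ Matrix.orthogonalGroup (Fin n) ℝ := by
    rw [Matrix.mem_unitaryGroup_iff]
    have hstar : star (σ.permMatrix ℝ) = (σ⁻¹).permMatrix ℝ := by
      rw [Matrix.star_eq_conjTranspose]
      have : ((σ⁻¹).permMatrix ℝ) = ((σ.toPEquiv).symm).toMatrix := by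
        rw [← Equiv.toPEquiv_symm]; rfl
      rw [this, PEquiv.toMatrix_symm]
      rfl
    rw [hstar, ← PEquiv.toMatrix_trans, ← Equiv.toPEquiv_trans]
    have hre : Equiv.trans σ σ⁻¹ = Equiv.refl (Fin n) := by
      ext x; simp
    rw [hre, Equiv.toPEquiv_refl, PEquiv.toMatrix_refl]
  set P : Matrix.orthogonalGroup (Fin n) ℝ := ⟨σ.permMatrix ℝ, hPmem⟩ with hP
  have hrow : ∀ (U : Matrix.orthogonalGroup (Fin n) ℝ) (i : Fin n),
      ((P * U : Matrix.orthogonalGroup (Fin n) ℝ) : Matrix (Fin n) (Fin n) ℝ) i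
        = (U : Matrix (Fin n) (Fin n) ℝ) (σ i) := by
    intro U i
    have : ((P * U : Matrix.orthogonalGroup (Fin n) ℝ) : Matrix (Fin n) (Fin n) ℝ)
        = ((U : Matrix (Fin n) (Fin n) ℝ)).submatrix σ id := by
      show (σ.permMatrix ℝ) * (U : Matrix (Fin n) (Fin n) ℝ) = _
      exact PEquiv.toMatrix_toPEquiv_mul σ _
    funext j
    rw [this]
    rfl
  have hGP : ∀ U, G (P * U) = F U := by
    intro U
    simp only [hF, hG, hrow]
    have : σ i1 = i0 := Equiv.swap_apply_right i0 i1
    rw [this]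
  have hmulmeas : Measurable fun U : Matrix.orthogonalGroup (Fin n) ℝ => P * U := by
    refine Measurable.subtype_mk ?_
    refine measurable_pi_lambda _ fun i => measurable_pi_lambda _ fun j => ?_
    simp only [Matrix.mul_apply]
    exact Finset.measurable_sum _ fun k _ => measurable_const.mul (entry_meas k j)
  -- ∫ G² = ∫ F²
  have hGF2 : ∫ U, G U ^ 2 ∂μ = ∫ U, F U ^ 2 ∂μ := by
    conv_lhs => rw [← hinv P]
    rw [integral_map hmulmeas.aemeasurable (hGm.pow_const 2).aestronglyMeasurable]
    simp only [hGP]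
  -- pointwise AM-GM
  have hpt : ∀ U, F U * G U ≤ (F U ^ 2 + G U ^ 2) / 2 := fun U => by nlinarith [sq_nonneg (F U - G U)]
  have hmono : ∫ U, F U * G U ∂μ ≤ ∫ U, (F U ^ 2 + G U ^ 2) / 2 ∂μ :=
    integral_mono hintFG ((hintF2.add hintG2).div_const 2) hpt
  have : ∫ U, (F U ^ 2 + G U ^ 2) / 2 ∂μ = ∫ U, F U ^ 2 ∂μ := by
    rw [integral_div, integral_add hintF2 hintG2, hGF2]
    ring
  show (∫ U, F U ^ 2 ∂μ) ≥ ∫ U, F U * G U ∂μ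
  rw [ge_iff_le]
  calc ∫ U, F U * G U ∂μ ≤ _ := hmono
    _ = _ := this
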